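/- arXiv:1903.04285 — 5 statements merged into one kernel-verified Lean document; each statement's English description precedes it below -/
import Mathlib

section
/- Let (L, α) be an A/k-Lie–Rinehart algebra, f ∈ Z²(Der_k(A), A), and L(α*f) := A·z ⊕ L with left action b(az+x) = (ba)z + bx, right action (az+x)b = (ab + α(x)(b))z + ax, and bracket [az+x, bz+y] = (α(x)(b) - α(y)(a) + f(α(x),α(y)))z + [x,y]. Then L(α*f) is a k-Lie algebra (Jacobi identity holds), z is central, and the anchor π_f(az+x) := α(x) satisfies [u, cv] = c[u,v] + π_f(u)(c)v and uc = cu + π_f(u)(c)z for all u,v ∈ L(α*f), c ∈ A; i.e., (L(α*f), π_f, [,], z) is a D-Lie algebra. -/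
/-!
`L(α*f)` is the abelian extension of the Lie ring `L` by the `L`-module `A` (on which `L` acts
through `α`), twisted by the pulled-back 2-cochain `(x, y) ↦ f (α x) (α y)`. For any such twisted
extension the Jacobi identity is exactly the cocycle identity of the cochain, read cyclically;
since `α` is a Lie map, the pullback of the cocycle `f` is again a cocycle. The compatibilities
with the anchor are the Leibniz rules of `α` and of derivations.
-/

section CocycleExtension

variable {M L : Type*} [AddCommGroup M] [LieRing L]

/-- The bracket on `M × L` of the abelian extension of `L` by the `L`-module `M` (action `ρ`)
twisted by the 2-cochain `g`. -/
def cocycleBracket (ρ : L → M →+ M) (g : L → L → M) (u v : M × L) : M × L :=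
  (ρ u.2 v.1 - ρ v.2 u.1 + g u.2 v.2, ⁅u.2, v.2⁆)

theorem lie_lie_add_lie_lie_add_lie_lie (x y w : L) :
    ⁅⁅x, y⁆, w⁆ + ⁅⁅y, w⁆, x⁆ + ⁅⁅w, x⁆, y⁆ = 0 := by
  rw [← lie_skew ⁅x, y⁆ w, ← lie_skew ⁅y, w⁆ x, ← lie_skew ⁅w, x⁆ y, ← neg_add, ← neg_add,
    neg_eq_zero, lie_jacobi w x y]

-- The cocycle identity in cyclic form, which for alternating `g` is the usual `dg = 0`.
theorem cocycleBracket_jacobi {ρ : L → M →+ M} {g : L → L → M}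
    (hρ : ∀ x y m, ρ ⁅x, y⁆ m = ρ x (ρ y m) - ρ y (ρ x m))
    (hg : ∀ x y w, ρ x (g y w) + ρ y (g w x) + ρ w (g x y) = g ⁅x, y⁆ w + g ⁅y, w⁆ x + g ⁅w, x⁆ y)
    (u v w : M × L) :
    cocycleBracket ρ g (cocycleBracket ρ g u v) w + cocycleBracket ρ g (cocycleBracket ρ g v w) u
      + cocycleBracket ρ g (cocycleBracket ρ g w u) v = 0 := by
  obtain ⟨a, x⟩ := u
  obtain ⟨b, y⟩ := v
  obtain ⟨c, w⟩ := w
  refine Prod.ext ?_ (lie_lie_add_lie_lie_add_lie_lie x y w)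
  simp only [cocycleBracket, Prod.fst_add, Prod.fst_zero, hρ, map_add, map_sub]
  rw [← sub_eq_zero_of_eq (hg x y w).symm]
  abel

end CocycleExtension

theorem cocycle_cyclic_of_isAlt {R 𝔤 M : Type*} [CommRing R] [LieRing 𝔤] [Module R 𝔤]
    [AddCommGroup M] [Module R M] {ρ : 𝔤 → M →+ M} {f : 𝔤 →ₗ[R] 𝔤 →ₗ[R] M} (hf : f.IsAlt)
    (hcocycle : ∀ x y z : 𝔤,
      ρ x (f y z) - ρ y (f x z) + ρ z (f x y) - f ⁅x, y⁆ z + f ⁅x, z⁆ y - f ⁅y, z⁆ x = 0)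
    (x y w : 𝔤) :
    ρ x (f y w) + ρ y (f w x) + ρ w (f x y) = f ⁅x, y⁆ w + f ⁅y, w⁆ x + f ⁅w, x⁆ y := by
  have h := hcocycle x y w
  simp only [← hf.neg w x, ← lie_skew x w, map_neg, LinearMap.neg_apply] at h
  rw [← sub_eq_zero, ← h]
  abel

section LieRinehart

variable {k A L : Type*} [CommRing k] [CommRing A] [Algebra k A] [LieRing L] [Module A L]

/-- The bracket of `L(α*f) = A·z ⊕ L`, with `z = (1, 0)`. -/
abbrev twistedBracket (α : L →ₗ[A] Derivation k A A)
    (f : Derivation k A A →ₗ[A] Derivation k A A →ₗ[A] A) : A × L → A × L → A × L :=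
  cocycleBracket (fun x => (α x : A →+ A)) (fun x y => f (α x) (α y))

theorem twistedBracket_smul_right {α : L →ₗ[A] Derivation k A A}
    (hLeib : ∀ (x y : L) (a : A), ⁅x, a • y⁆ = a • ⁅x, y⁆ + (α x) a • y)
    (f : Derivation k A A →ₗ[A] Derivation k A A →ₗ[A] A) (u v : A × L) (c : A) :
    twistedBracket α f u (c • v) = c • twistedBracket α f u v + α u.2 c • v := by
  refine Prod.ext ?_ (hLeib u.2 v.2 c)
  simp only [twistedBracket, cocycleBracket, Prod.fst_add, Prod.smul_fst, Prod.smul_snd,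
    smul_eq_mul, map_smul, Derivation.smul_apply, AddMonoidHom.coe_coe, Derivation.leibniz]
  ring

end LieRinehart

/-- for an `A/k`-Lie–Rinehart algebra `(L, α)` and a 2-cocycle
`f ∈ Z²(Der_k(A), A)`, the twisted extension `L(α*f) = A·z ⊕ L` with bracket
`[az+x, bz+y] = (α(x)(b) - α(y)(a) + f(α(x),α(y)))z + [x,y]`, left action
`b(az+x) = (ba)z + bx` and right action `(az+x)b = (ab + α(x)(b))z + bx`
is a D-Lie algebra: the Jacobi identity holds, `z = (1,0)` is central, and
the anchor `π_f(az+x) = α(x)` satisfies `[u, cv] = c[u,v] + π_f(u)(c)v` and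
`uc = cu + π_f(u)(c)z`. -/
theorem lieRinehart_extension_is_DLie {k A L : Type*} [CommRing k] [CommRing A]
    [Algebra k A] [LieRing L] [Module A L]
    (α : L →ₗ[A] Derivation k A A)
    (hαLie : ∀ x y : L, α ⁅x, y⁆ = ⁅α x, α y⁆)
    (hLeib : ∀ (x y : L) (a : A), ⁅x, a • y⁆ = a • ⁅x, y⁆ + (α x) a • y)
    (f : Derivation k A A →ₗ[A] Derivation k A A →ₗ[A] A)
    (halt : ∀ x : Derivation k A A, f x x = 0)
    (hcocycle : ∀ x y z : Derivation k A A,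
      x (f y z) - y (f x z) + z (f x y)
        - f ⁅x, y⁆ z + f ⁅x, z⁆ y - f ⁅y, z⁆ x = 0) :
    let br : A × L → A × L → A × L := fun u v =>
      (α u.2 v.1 - α v.2 u.1 + f (α u.2) (α v.2), ⁅u.2, v.2⁆)
    let lsm : A → A × L → A × L := fun c u => (c * u.1, c • u.2)
    let rsm : A × L → A → A × L := fun u b => (u.1 * b + α u.2 b, b • u.2)
    let z : A × L := ((1 : A), (0 : L))
    (∀ u v w : A × L, br (br u v) w + br (br v w) u + br (br w u) v = 0) ∧
    (∀ u : A × L, br z u = 0 ∧ br u z = 0) ∧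
    (∀ (u v : A × L) (c : A), br u (lsm c v) = lsm c (br u v) + lsm (α u.2 c) v) ∧
    (∀ (u : A × L) (c : A), rsm u c = lsm c u + lsm (α u.2 c) z) := by
  intro br lsm rsm z
  have hbr : br = twistedBracket α f := rfl
  have hcyclic :=
    cocycle_cyclic_of_isAlt (ρ := fun D : Derivation k A A => (D : A →+ A)) halt hcocycle
  refine ⟨?_, fun u => ⟨?_, ?_⟩, ?_, fun u c => ?_⟩
  · rw [hbr]
    refine cocycleBracket_jacobi (fun x y m => ?_) (fun x y w => ?_)
    · exact (congrArg (· m) (hαLie x y)).trans (Derivation.commutator_apply m)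
    · simpa only [hαLie] using hcyclic (α x) (α y) (α w)
  · simp [br, z]
  · simp [br, z]
  · rw [hbr]; exact twistedBracket_smul_right hLeib f
  · ext <;> simp [rsm, lsm, z, mul_comm]
end

section
/- Let (L, α) be an A/k-Lie–Rinehart algebra, f ∈ Z²(Der_k(A), A), and L(α*f) the associated D-Lie algebra. There is a bijection between A⊗_kA-linear maps ρ : L(α*f) → End_k(E) and pairs (∇, ψ) with ψ ∈ End_A(E) and ∇ : L → End_k(E) an A-linear map satisfying ∇(x)(ae) = a∇(x)(e) + α(x)(a)ψ(e); the correspondence sends ρ to (ρ∘i, ρ(z)) where i : L → L(α*f) is the inclusion, and conversely (∇, ψ) to ρ(az+x) := aψ + ∇(x). -/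
/-- for an `A/k`-Lie–Rinehart algebra `(L, α)` and the associated
D-Lie algebra `L(α*f) = Az ⊕ L` (with left action `c•(a,x) = (ca, cx)` and right
action `(a,x)·c = (ac + α(x)(c), cx)`), there is a bijection between
`A⊗_kA`-linear maps `ρ : L(α*f) → End_k(E)` and pairs `(∇, ψ)` with
`ψ ∈ End_A(E)` and `∇ : L → End_k(E)` `A`-linear satisfying
`∇(x)(ae) = a∇(x)(e) + α(x)(a)ψ(e)`; the correspondence sends `ρ` to
`(ρ∘i, ρ(z))` with `i : L → L(α*f)` the inclusion and `z = (1,0)`. -/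
theorem connection_correspondence {k A L E : Type*} [CommRing k] [CommRing A]
    [Algebra k A] [LieRing L] [Module A L]
    [AddCommGroup E] [Module k E] [Module A E] [IsScalarTower k A E]
    (α : L →ₗ[A] Derivation k A A) :
    ∃ Φ : {ρ : A × L → E →ₗ[k] E //
        (∀ u v : A × L, ρ (u + v) = ρ u + ρ v) ∧
        (∀ (c : A) (u : A × L) (e : E), ρ (c * u.1, c • u.2) e = c • ρ u e) ∧
        (∀ (u : A × L) (c : A) (e : E),
          ρ (u.1 * c + α u.2 c, c • u.2) e = ρ u (c • e))} ≃
      {p : (L → E →ₗ[k] E) × (E →ₗ[k] E) //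
        (∀ (a : A) (e : E), p.2 (a • e) = a • p.2 e) ∧
        (∀ x y : L, p.1 (x + y) = p.1 x + p.1 y) ∧
        (∀ (a : A) (x : L) (e : E), p.1 (a • x) e = a • p.1 x e) ∧
        (∀ (x : L) (a : A) (e : E),
          p.1 x (a • e) = a • p.1 x e + (α x) a • p.2 e)},
      ∀ ρ, ((Φ ρ).1.1 = fun x : L => ρ.1 ((0 : A), x)) ∧
        (Φ ρ).1.2 = ρ.1 ((1 : A), (0 : L)) := by
  refine ⟨⟨fun ρ => ⟨((fun x => ρ.1 (0, x)), ρ.1 (1, 0)), ?_, ?_, ?_, ?_⟩,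
      fun p => ⟨fun u => u.1 • p.1.2 + p.1.1 u.2, ?_, ?_, ?_⟩, ?_, ?_⟩,
    fun ρ => ⟨rfl, rfl⟩⟩
  · -- ψ is A-linear
    intro a e
    obtain ⟨hadd, hl, hr⟩ := ρ.2
    have h1 := hr (1, 0) a e
    simp only [map_zero, Derivation.coe_zero, Pi.zero_apply, add_zero, one_mul,
      smul_zero] at h1
    have h2 := hl a (1, 0) e
    simp only [mul_one, smul_zero] at h2
    rw [← h1, h2]
  · -- ∇ additive
    intro x y
    have := ρ.2.1 (0, x) (0, y)
    simpa using this
  · -- ∇ A-linear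
    intro a x e
    have := ρ.2.2.1 a (0, x) e
    simpa using this
  · -- Leibniz
    intro x a e
    obtain ⟨hadd, hl, hr⟩ := ρ.2
    have h1 := hr (0, x) a e
    simp only [zero_mul, zero_add] at h1
    have h2 := hadd (α x a, 0) (0, a • x)
    have h3 : ((α x a : A), a • x) = ((α x a : A), (0 : L)) + ((0 : A), a • x) := by
      simp
    rw [← h1, h3, h2]
    have h4 := hl (α x a) (1, 0) e
    simp only [mul_one, smul_zero] at h4
    have h5 := hl a (0, x) e
    simp only [mul_zero] at h5
    simp only [LinearMap.add_apply, h4, h5]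
    abel
  · -- inverse: additivity
    intro u v
    obtain ⟨hψ, hadd, hlin, hleib⟩ := p.2
    ext e
    simp only [LinearMap.add_apply, hadd, Prod.fst_add, Prod.snd_add, add_smul,
      LinearMap.smul_apply]
    abel
  · -- inverse: left A-linear
    intro c u e
    obtain ⟨hψ, hadd, hlin, hleib⟩ := p.2
    simp only [LinearMap.add_apply, LinearMap.smul_apply, hlin, mul_smul, smul_add]
  · -- inverse: right
    intro u c e
    obtain ⟨hψ, hadd, hlin, hleib⟩ := p.2
    simp only [LinearMap.add_apply, LinearMap.smul_apply, hlin, hleib u.2 c e, hψ,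
      add_smul, mul_smul, smul_add]
    abel
  · -- left inverse
    intro ρ
    obtain ⟨hadd, hl, hr⟩ := ρ.2
    apply Subtype.ext
    ext u e
    have h2 := hadd (u.1, 0) (0, u.2)
    have h3 : ((u.1, u.2) : A × L) = (u.1, 0) + (0, u.2) := by simp
    have h4 := hl u.1 (1, 0) e
    simp only [mul_one, smul_zero] at h4
    simp only [LinearMap.add_apply, LinearMap.smul_apply]
    conv_rhs => rw [show (u : A × L) = (u.1, u.2) from rfl, h3, h2]
    simp only [LinearMap.add_apply, h4]
  · -- right inverse
    intro p
    obtain ⟨hψ, hadd, hlin, hleib⟩ := p.2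
    apply Subtype.ext
    have h0 : p.1.1 0 = 0 := by
      have := hadd 0 0
      simp only [add_zero] at this
      exact (add_eq_left.mp this.symm)
    refine Prod.ext ?_ ?_
    · funext x
      ext e
      simp [h0]
    · ext e
      simp [h0]
end

section
/- Let E be a finitely generated projective A-module with projective basis x_1,…,x_r ∈ E* and e_1,…,e_r ∈ E (so Σ_i x_i(e)e_i = e for all e). Define ρ : End_k(A) → End_k(E) on differential operators by ρ(D)(e) := Σ_i D(x_i(e))·e_i. Then ρ is A⊗_kA-linear (ρ((a⊗b)·D) = (a⊗b)·ρ(D), where (a⊗b)·D = a∘D∘b), and if D is a differential operator on A of order ≤ l then ρ(D) is a differential operator on E of order ≤ l. -/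
/-!
`ρ(D) = Σ_i e_i ∘ D ∘ x_i`, where `e_i : A → E` is `t ↦ t • e_i`. Commutators with
scalars pass through `A`-linear maps on either side and through sums, so by induction
on the order the differential operators of order `≤ l` are closed under sums and under
`φ ↦ g ∘ φ ∘ f` for `A`-linear `f`, `g`.
-/

/-- The commutator `[φ, a·Id] : m ↦ φ(a•m) - a•φ(m)`. -/
def commOp (A : Type*) [CommRing A] {M : Type*} [AddCommGroup M] [Module A M]
    (a : A) (φ : M → M) : M → M :=
  fun m => φ (a • m) - a • φ m

/-- `IsDO A l φ`: `φ` is a differential operator of order `≤ l` on the `A`-module `M`: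
order `≤ 0` means `A`-linear, and order `≤ l+1` means `[φ, a·Id]` has order `≤ l`
for all `a ∈ A`. -/
def IsDO (A : Type*) [CommRing A] {M : Type*} [AddCommGroup M] [Module A M] :
    ℕ → (M → M) → Prop
  | 0 => fun φ => ∀ (a : A) (m : M), φ (a • m) = a • φ m
  | l + 1 => fun φ => ∀ a : A, IsDO A l (commOp A a φ)

section

variable {A M N : Type*} [CommRing A] [AddCommGroup M] [Module A M]
  [AddCommGroup N] [Module A N]

theorem commOp_zero (a : A) : commOp A a (0 : M → M) = 0 := by
  funext m
  simp [commOp]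

theorem commOp_add (a : A) (φ ψ : M → M) :
    commOp A a (φ + ψ) = commOp A a φ + commOp A a ψ := by
  funext m
  simp only [commOp, Pi.add_apply, smul_add]
  abel

theorem commOp_linearMap_comp_comp (a : A) (g : N →ₗ[A] M) (φ : N → N) (f : M →ₗ[A] N) :
    commOp A a (g ∘ φ ∘ f) = g ∘ commOp A a φ ∘ f := by
  funext m
  simp [commOp, map_smul, map_sub]

theorem IsDO.zero (l : ℕ) : IsDO A l (0 : M → M) := by
  induction l with
  | zero => intro a m; simp
  | succ l ih => intro a; rw [commOp_zero]; exact ih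

theorem IsDO.add {l : ℕ} {φ ψ : M → M} (hφ : IsDO A l φ) (hψ : IsDO A l ψ) :
    IsDO A l (φ + ψ) := by
  induction l generalizing φ ψ with
  | zero => intro a m; simp [hφ a m, hψ a m]
  | succ l ih => intro a; rw [commOp_add]; exact ih (hφ a) (hψ a)

theorem IsDO.sum {ι : Type*} {s : Finset ι} {l : ℕ} {φ : ι → M → M}
    (h : ∀ i ∈ s, IsDO A l (φ i)) : IsDO A l (∑ i ∈ s, φ i) :=
  Finset.sum_induction φ (IsDO A l) (fun _ _ => IsDO.add) (IsDO.zero l) h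

theorem IsDO.linearMap_comp_comp {l : ℕ} {φ : N → N} (hφ : IsDO A l φ)
    (g : N →ₗ[A] M) (f : M →ₗ[A] N) : IsDO A l (g ∘ φ ∘ f) := by
  induction l generalizing φ with
  | zero => intro a m; simp [hφ a (f m)]
  | succ l ih => intro a; rw [commOp_linearMap_comp_comp]; exact ih (hφ a)

end

theorem projective_basis_diffop_general {A E : Type*} [CommRing A]
    [AddCommGroup E] [Module A E]
    (r : ℕ) (x : Fin r → (E →ₗ[A] A)) (e : Fin r → E) :
    let ρ : (A → A) → E → E := fun D v => ∑ i, D (x i v) • e i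
    (∀ (D D' : A → A) (v : E), ρ (fun t => D t + D' t) v = ρ D v + ρ D' v) ∧
    (∀ (a b : A) (D : A → A) (v : E),
      ρ (fun t => a * D (b * t)) v = a • ρ D (b • v)) ∧
    (∀ (l : ℕ) (D : A → A), IsDO A l D → IsDO A l (ρ D)) := by
  intro ρ
  have hρ : ∀ D, ρ D = ∑ i, LinearMap.toSpanSingleton A E (e i) ∘ D ∘ x i := by
    intro D
    funext v
    simp [ρ, Finset.sum_apply]
  refine ⟨fun D D' v => ?_, fun a b D v => ?_, fun l D hD => ?_⟩
  · simp only [ρ, add_smul, Finset.sum_add_distrib]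
  · simp only [ρ, Finset.smul_sum, smul_smul, map_smul, smul_eq_mul]
  · rw [hρ]
    exact IsDO.sum fun i _ => hD.linearMap_comp_comp _ _

/-- let `E` be a finitely generated projective `A`-module with
projective basis `x_1,…,x_r ∈ E*`, `e_1,…,e_r ∈ E` (so `Σ_i x_i(e)e_i = e`), and
define `ρ(D)(e) = Σ_i D(x_i(e))·e_i`.  Then `ρ` is additive and `A⊗_kA`-linear
(`ρ((a⊗b)·D) = (a⊗b)·ρ(D)` with `(a⊗b)·D = a∘D∘b`), and if `D` is a differential
operator of order `≤ l` on `A` then `ρ(D)` is a differential operator of order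
`≤ l` on `E`. -/
theorem projective_basis_diffop {k A E : Type*} [CommRing k] [CommRing A]
    [Algebra k A] [AddCommGroup E] [Module A E]
    (r : ℕ) (x : Fin r → (E →ₗ[A] A)) (e : Fin r → E)
    (hbasis : ∀ v : E, ∑ i, x i v • e i = v) :
    let ρ : (A → A) → E → E := fun D v => ∑ i, D (x i v) • e i
    (∀ (D D' : A → A) (v : E), ρ (fun t => D t + D' t) v = ρ D v + ρ D' v) ∧
    (∀ (a b : A) (D : A → A) (v : E),
      ρ (fun t => a * D (b * t)) v = a • ρ D (b • v)) ∧
    (∀ (l : ℕ) (D : A → A), IsDO A l D → IsDO A l (ρ D)) :=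
  projective_basis_diffop_general r x e
end

section
/- Let E = A^r/ker(p) be a finitely generated projective A-module presented by the projective basis idempotent φ = (x_i(e_j)) ∈ M_r(A), and let ∇ : Der_k(A) → End_k(E) be the connection ∇(δ)(e) := Σ_i δ(x_i(e))e_i. Then for all derivations δ, η ∈ Der_k(A), the matrix commutator [δ(φ), η(φ)] preserves ker(p), and the curvature of ∇ satisfies R_∇(δ, η) = [δ(φ), η(φ)] as an endomorphism of E, where δ(φ) denotes entrywise application of δ to φ. -/
/-- let `E` be a finitely generated projective `A`-module with
projective basis `x_1,…,x_r ∈ E*`, `e_1,…,e_r ∈ E`, presented by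
`p : A^r → E`, `p(u) = Σ u_i e_i`, with idempotent matrix `φ_{ij} = x_i(e_j)`,
and let `∇(δ)(v) = Σ_i δ(x_i(v))e_i` be the associated connection.  Then for all
derivations `δ, η` the matrix commutator `[δ(φ), η(φ)]` preserves `ker(p)`, and the
curvature satisfies `R_∇(δ,η)(p(u)) = p([δ(φ), η(φ)]·u)`, i.e.
`R_∇(δ,η) = [δ(φ), η(φ)]` as an endomorphism of `E`. -/
theorem curvature_projective_basis {k A E : Type*} [CommRing k] [CommRing A]
    [Algebra k A] [AddCommGroup E] [Module A E]
    (r : ℕ) (x : Fin r → (E →ₗ[A] A)) (e : Fin r → E)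
    (hbasis : ∀ v : E, ∑ i, x i v • e i = v)
    (δ η : Derivation k A A) :
    let p : (Fin r → A) → E := fun u => ∑ i, u i • e i
    let φ : Matrix (Fin r) (Fin r) A := fun i j => x i (e j)
    let Dm : Derivation k A A → Matrix (Fin r) (Fin r) A := fun d i j => d (φ i j)
    let M : Matrix (Fin r) (Fin r) A := Dm δ * Dm η - Dm η * Dm δ
    let nabla : Derivation k A A → E → E := fun d v => ∑ i, d (x i v) • e i
    (∀ u : Fin r → A, p u = 0 → p (M.mulVec u) = 0) ∧
    (∀ u : Fin r → A,
      nabla δ (nabla η (p u)) - nabla η (nabla δ (p u)) - nabla ⁅δ, η⁆ (p u)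
        = p (M.mulVec u)) := by
  intro p φ Dm M nabla
  -- basic linearity of p
  have hplin : ∀ (a b : Fin r → A), p (fun i => a i + b i) = p a + p b := by
    intro a b; simp only [p, add_smul, Finset.sum_add_distrib]
  have hpsub : ∀ (a b : Fin r → A), p (fun i => a i - b i) = p a - p b := by
    intro a b; simp only [p, sub_smul, Finset.sum_sub_distrib]
  -- x i (p w) = (φ.mulVec w) i
  have hx : ∀ (w : Fin r → A) i, x i (p w) = φ.mulVec w i := by
    intro w i
    simp only [p, φ, Matrix.mulVec, dotProduct, map_sum, map_smul, smul_eq_mul]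
    exact Finset.sum_congr rfl fun j _ => mul_comm _ _
  -- p (φ.mulVec w) = p w
  have hpφ : ∀ (w : Fin r → A), p (φ.mulVec w) = p w := by
    intro w
    calc p (φ.mulVec w) = ∑ i, ∑ j, (w j) • ((x i (e j)) • e i) :=
        Finset.sum_congr rfl fun i _ => by
          rw [Matrix.mulVec, dotProduct, Finset.sum_smul]
          exact Finset.sum_congr rfl fun j _ => by rw [mul_comm, mul_smul]
      _ = ∑ j, (w j) • (∑ i, (x i (e j)) • e i) := by
          rw [Finset.sum_comm]
          exact Finset.sum_congr rfl fun j _ => (Finset.smul_sum).symm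
      _ = p w := by simp only [hbasis]; rfl
  -- key formula for nabla
  have hB : ∀ (d : Derivation k A A) (w : Fin r → A),
      nabla d (p w) = p (fun i => (Dm d).mulVec w i + d (w i)) := by
    intro d w
    have h1 : nabla d (p w) = p (fun i => d (φ.mulVec w i)) := by
      simp only [nabla, hx]; rfl
    have h2 : (fun i => d (φ.mulVec w i))
        = fun i => (Dm d).mulVec w i + φ.mulVec (fun j => d (w j)) i := by
      funext i
      simp only [Matrix.mulVec, dotProduct, map_sum, Derivation.leibniz,
        smul_eq_mul, Dm, Finset.sum_add_distrib]
      rw [add_comm]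
      congr 1
      exact Finset.sum_congr rfl fun j _ => mul_comm _ _
    rw [h1, h2, hplin, hplin, hpφ]
  -- main computation
  have main : ∀ u : Fin r → A,
      nabla δ (nabla η (p u)) - nabla η (nabla δ (p u)) - nabla ⁅δ, η⁆ (p u)
        = p (M.mulVec u) := by
    intro u
    rw [hB η u, hB δ u, hB δ, hB η, hB ⁅δ, η⁆ u, ← hpsub, ← hpsub]
    congr 1
    funext i
    have comm : ∀ a : A, ⁅δ, η⁆ a = δ (η a) - η (δ a) := fun a => rfl
    simp only [Matrix.mulVec, dotProduct, M, Dm, map_add, map_sum,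
      Derivation.leibniz, smul_eq_mul, comm, Matrix.sub_apply, Matrix.mul_apply,
      mul_add, add_mul, sub_mul, Finset.sum_add_distrib, Finset.sum_sub_distrib,
      Finset.mul_sum, Finset.sum_mul]
    ring_nf
    rw [show (∑ j : Fin r, u j * δ (η (φ i j))) = ∑ j : Fin r, δ (η (φ i j)) * u j from
        Finset.sum_congr rfl fun _ _ => mul_comm _ _,
      show (∑ j : Fin r, u j * η (δ (φ i j))) = ∑ j : Fin r, η (δ (φ i j)) * u j from
        Finset.sum_congr rfl fun _ _ => mul_comm _ _,
      Finset.sum_comm (s := Finset.univ) (t := Finset.univ)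
        (f := fun a b => δ (φ i a) * η (φ a b) * u b),
      Finset.sum_comm (s := Finset.univ) (t := Finset.univ)
        (f := fun a b => η (φ i a) * δ (φ a b) * u b)]
    show _ = ∑ x, (∑ j, δ (φ i j) * η (φ j x)) * u x - ∑ x, (∑ j, η (φ i j) * δ (φ j x)) * u x
    simp only [Finset.sum_mul]
    abel
  refine ⟨fun u hu => ?_, main⟩
  have := main u
  rw [hu] at this
  simpa [nabla, p] using this.symm
end

section
/- Let (L̃, α̃, π̃, [,], D) be a D-Lie algebra, E a left A-module, and ρ : L̃ → End_k(E) an A⊗_kA-linear map with ρ(D) = Id_E. For u ∈ L̃ and φ ∈ End_A(E), the commutator [ρ(u), φ] lies in End_A(E). Define End(L̃,E) := End_A(E) ⊕ L̃ with bracket [(φ,u), (ψ,v)] := ([φ,ψ] + [ρ(u),ψ] - [ρ(v),φ] + R_ρ(u,v), [u,v]) where R_ρ(u,v) = [ρ(u),ρ(v)] - ρ([u,v]). Then the map ρ^! : End(L̃,E) → End_k(E), ρ^!(φ,u) := φ + ρ(u), is a morphism of k-Lie algebras: ρ^!([z,z']) = [ρ^!(z), ρ^!(z')] for all z, z' ∈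 End(L̃,E). -/
/-- let `(L̃, π̃, [,], D)` be a D-Lie algebra, `E` a left `A`-module,
and `ρ : L̃ → End_k(E)` an `A⊗_kA`-linear map with `ρ(D) = Id_E`.  Then
`[ρ(u), φ] ∈ End_A(E)` for `φ ∈ End_A(E)`, and the map
`ρ^! : End(L̃,E) = End_A(E) ⊕ L̃ → End_k(E)`, `(φ,u) ↦ φ + ρ(u)`, is a morphism
of `k`-Lie algebras for the bracket
`[(φ,u),(ψ,v)] = ([φ,ψ] + [ρ(u),ψ] - [ρ(v),φ] + R_ρ(u,v), [u,v])` with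
`R_ρ(u,v) = [ρ(u),ρ(v)] - ρ([u,v])`. -/
theorem rho_shriek_lie_morphism {k A L E : Type*} [CommRing k] [CommRing A]
    [Algebra k A] [LieRing L] [Module A L]
    [AddCommGroup E] [Module k E] [Module A E] [IsScalarTower k A E]
    (π : L → Derivation k A A) (D : L) (hπD : π D = 0)
    (hcent : ∀ u : L, ⁅D, u⁆ = 0)
    (ρ : L → Module.End k E)
    (hadd : ∀ u v : L, ρ (u + v) = ρ u + ρ v)
    (hleft : ∀ (c : A) (u : L) (e : E), ρ (c • u) e = c • ρ u e)
    (hright : ∀ (u : L) (c : A) (e : E), ρ (c • u + (π u) c • D) e = ρ u (c • e))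
    (hD : ρ D = LinearMap.id) :
    let R : L → L → Module.End k E := fun u v => ⁅ρ u, ρ v⁆ - ρ ⁅u, v⁆
    let br : (Module.End k E × L) → (Module.End k E × L) → (Module.End k E × L) :=
      fun z z' => (⁅z.1, z'.1⁆ + ⁅ρ z.2, z'.1⁆ - ⁅ρ z'.2, z.1⁆ + R z.2 z'.2,
        ⁅z.2, z'.2⁆)
    let rhoShriek : Module.End k E × L → Module.End k E := fun z => z.1 + ρ z.2
    (∀ (u : L) (φ : Module.End k E), (∀ (a : A) (e : E), φ (a • e) = a • φ e) →
      ∀ (a : A) (e : E), ⁅ρ u, φ⁆ (a • e) = a • ⁅ρ u, φ⁆ e) ∧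
    (∀ z z' : Module.End k E × L,
      rhoShriek (br z z') = ⁅rhoShriek z, rhoShriek z'⁆) := by
  intro R br rhoShriek
  have key : ∀ (u : L) (a : A) (e : E), ρ u (a • e) = a • ρ u e + (π u) a • e := by
    intro u a e
    rw [← hright u a e, hadd, LinearMap.add_apply, hleft, hleft, hD]
    simp
  constructor
  · intro u φ hφ a e
    simp only [LieRing.of_associative_ring_bracket, LinearMap.sub_apply,
      Module.End.mul_apply]
    rw [hφ, key, key, map_add, hφ, hφ]
    rw [smul_sub]; abel
  · intro z z'
    simp only [rhoShriek, br, R, LieRing.of_associative_ring_bracket, hadd]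
    noncomm_ring
end
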